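/- Let (A, ·) be a perm algebra and 𝔅 a nondegenerate bilinear form on A with associated map 𝔅♯: A → A* given by ⟨𝔅♯(a), b⟩ = 𝔅(a, b), and let φ_𝔅 ∈ A ⊗ A be the 2-tensor with T_{φ_𝔅} = (𝔅♯)⁻¹. Then 𝔅 is skew-symmetric and invariant (i.e., 𝔅(a·b, c) = 𝔅(a, b·c − c·b) for all a, b, c) if and only if φ_𝔅 is skew-symmetric and (R, ad)-invariant. -/

import Mathlib

open TensorProduct

section
variable {K : Type*} [Field K] {A : Type*} [AddCommGroup A] [Module K A]

/-- perm identity for a plain binary operation -/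
def IsPermFn {X : Type*} (mu : X → X → X) : Prop :=
  ∀ a b c : X, mu a (mu b c) = mu (mu a b) c ∧ mu (mu a b) c = mu (mu b a) c

/-- perm algebra: bundled bilinear multiplication satisfying the perm identities -/
def IsPermMul (m : A →ₗ[K] A →ₗ[K] A) : Prop :=
  ∀ a b c : A, m a (m b c) = m (m a b) c ∧ m (m a b) c = m (m b a) c

/-- The map `T_r : A* → A` associated with a 2-tensor `r ∈ A ⊗ A`,
`T_r(a*) = Σ ⟨a*, a_i⟩ b_i` for `r = Σ a_i ⊗ b_i`. -/
noncomputable def Tten (r : A ⊗[K] A) : Module.Dual K A →ₗ[K] A :=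
  TensorProduct.lift (LinearMap.mk₂ K
    (fun a b => (Module.Dual.eval K A a).smulRight b)
    (by intro a a' b; ext f; simp [add_smul])
    (by intro c a b; ext f; simp [mul_smul])
    (by intro a b b'; ext f; simp [smul_add])
    (by intro c a b; ext f; simp [smul_comm c])) r

noncomputable def mulT (m : A →ₗ[K] A →ₗ[K] A) : A ⊗[K] A →ₗ[K] A := TensorProduct.lift m

noncomputable def p13_23 (m : A →ₗ[K] A →ₗ[K] A) :
    (A ⊗[K] A) ⊗[K] (A ⊗[K] A) →ₗ[K] (A ⊗[K] A) ⊗[K] A :=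
  (TensorProduct.map LinearMap.id (mulT m)) ∘ₗ
    (TensorProduct.tensorTensorTensorComm K A A A A).toLinearMap

noncomputable def p12_13 (m : A →ₗ[K] A →ₗ[K] A) :
    (A ⊗[K] A) ⊗[K] (A ⊗[K] A) →ₗ[K] (A ⊗[K] A) ⊗[K] A :=
  (TensorProduct.assoc K A A A).symm.toLinearMap ∘ₗ
    (TensorProduct.map (mulT m) LinearMap.id) ∘ₗ
    (TensorProduct.tensorTensorTensorComm K A A A A).toLinearMap

noncomputable def p13_12 (m : A →ₗ[K] A →ₗ[K] A) :
    (A ⊗[K] A) ⊗[K] (A ⊗[K] A) →ₗ[K] (A ⊗[K] A) ⊗[K] A :=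
  (TensorProduct.assoc K A A A).symm.toLinearMap ∘ₗ
    (TensorProduct.map (mulT m) (TensorProduct.comm K A A).toLinearMap) ∘ₗ
    (TensorProduct.tensorTensorTensorComm K A A A A).toLinearMap

noncomputable def p12_23 (m : A →ₗ[K] A →ₗ[K] A) :
    (A ⊗[K] A) ⊗[K] (A ⊗[K] A) →ₗ[K] (A ⊗[K] A) ⊗[K] A :=
  (TensorProduct.assoc K A A A).symm.toLinearMap ∘ₗ
    (TensorProduct.leftComm K A A A).toLinearMap ∘ₗ
    (TensorProduct.map (mulT m) LinearMap.id) ∘ₗ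
    (TensorProduct.tensorTensorTensorComm K A A A A).toLinearMap ∘ₗ
    (TensorProduct.map (TensorProduct.comm K A A).toLinearMap LinearMap.id)

/-- `[[r,r]] = r₁₂·r₂₃ − r₁₃·r₂₃ + r₁₂·r₁₃ − r₁₃·r₁₂` -/
noncomputable def ybrac (m : A →ₗ[K] A →ₗ[K] A) (r : A ⊗[K] A) : (A ⊗[K] A) ⊗[K] A :=
  p12_23 m (r ⊗ₜ r) - p13_23 m (r ⊗ₜ r) + p12_13 m (r ⊗ₜ r) - p13_12 m (r ⊗ₜ r)

/-- the perm Yang-Baxter equation -/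
noncomputable def IsPYBESol (m : A →ₗ[K] A →ₗ[K] A) (r : A ⊗[K] A) : Prop := ybrac m r = 0

/-- `(id ⊗ R(a) − ad(a) ⊗ id)(s) = 0` for all `a`. -/
def RadInv (m : A →ₗ[K] A →ₗ[K] A) (s : A ⊗[K] A) : Prop :=
  ∀ a : A, TensorProduct.map LinearMap.id (m.flip a) s
    = TensorProduct.map (m a - m.flip a) LinearMap.id s

variable {V : Type*} [AddCommGroup V] [Module K V]

/-- representation of a perm algebra -/
def IsPermRep (m : A →ₗ[K] A →ₗ[K] A) (l rr : A →ₗ[K] V →ₗ[K] V) : Prop :=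
  ∀ a b : A, l (m a b) = l a ∘ₗ l b ∧ l a ∘ₗ l b = l b ∘ₗ l a ∧
    rr (m a b) = rr b ∘ₗ rr a ∧ rr b ∘ₗ rr a = rr b ∘ₗ l a ∧ rr b ∘ₗ l a = l a ∘ₗ rr b

/-- A-perm algebra -/
def IsAPermAlg (m : A →ₗ[K] A →ₗ[K] A) (l rr : A →ₗ[K] V →ₗ[K] V)
    (mV : V →ₗ[K] V →ₗ[K] V) : Prop :=
  IsPermRep m l rr ∧ IsPermMul mV ∧
  (∀ (a : A) (u w : V), rr a (mV u w) = rr a (mV w u) ∧ rr a (mV u w) = mV u (rr a w)) ∧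
  (∀ (a : A) (u w : V), mV (l a u) w = mV (rr a u) w ∧ mV (l a u) w = l a (mV u w) ∧
    l a (mV u w) = mV u (l a w))


/- Since `T_φ` inverts `𝔅♯`, both conditions on `φ` can be transported to conditions on `𝔅`.
In finite dimension `r ↦ T_r` is injective, and it turns the flip and `χ ⊗ ψ` into
`⟨T_{σ r}(f), g⟩ = ⟨T_r(g), f⟩` and `T_{(χ ⊗ ψ) r}(f) = ψ (T_r (f ∘ χ))`; substituting
`f = 𝔅♯ a`, `g = 𝔅♯ b` gives exactly skew-symmetry, resp. invariance, of `𝔅`. -/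

lemma Tten_tmul (a b : A) (f : Module.Dual K A) : Tten (a ⊗ₜ[K] b) f = f a • b := by
  simp [Tten]

lemma Tten_eq_dualTensorHomEquiv [FiniteDimensional K A] (r : A ⊗[K] A) :
    Tten r = dualTensorHomEquiv K (Module.Dual K A) A
      (TensorProduct.congr (Module.evalEquiv K A) (LinearEquiv.refl K A) r) := by
  induction r using TensorProduct.induction_on with
  | zero => simp [Tten]
  | tmul a b => ext f; simp [Tten_tmul]
  | add r s hr hs => simp only [Tten, map_add] at *; rw [hr, hs]

lemma Tten_injective [FiniteDimensional K A] : Function.Injective (Tten : A ⊗[K] A → _) := by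
  intro r s h
  rw [Tten_eq_dualTensorHomEquiv, Tten_eq_dualTensorHomEquiv] at h
  exact (TensorProduct.congr _ _).injective ((dualTensorHomEquiv _ _ _).injective h)

lemma Tten_ext_iff [FiniteDimensional K A] {r s : A ⊗[K] A} :
    r = s ↔ ∀ f : Module.Dual K A, Tten r f = Tten s f :=
  Tten_injective.eq_iff.symm.trans LinearMap.ext_iff

lemma Tten_ext_iff_dual [FiniteDimensional K A] {r s : A ⊗[K] A} :
    r = s ↔ ∀ f g : Module.Dual K A, g (Tten r f) = g (Tten s f) := by
  refine Tten_ext_iff.trans <| forall_congr' fun f => ?_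
  rw [← (Module.eval_apply_injective K).eq_iff, LinearMap.ext_iff]
  rfl

lemma Tten_neg (r : A ⊗[K] A) : Tten (-r) = -Tten r := by
  simp [Tten]

lemma Tten_comm_apply (r : A ⊗[K] A) (f g : Module.Dual K A) :
    g (Tten (TensorProduct.comm K A A r) f) = f (Tten r g) := by
  induction r using TensorProduct.induction_on with
  | zero => simp [Tten]
  | tmul a b => simp [Tten_tmul, mul_comm]
  | add r s hr hs => simp_all [Tten]

lemma Tten_map (χ ψ : A →ₗ[K] A) (r : A ⊗[K] A) (f : Module.Dual K A) :
    Tten (TensorProduct.map χ ψ r) f = ψ (Tten r (f ∘ₗ χ)) := by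
  induction r using TensorProduct.induction_on with
  | zero => simp [Tten]
  | tmul a b => simp [Tten_tmul]
  | add r s hr hs => simp_all [Tten]

lemma comm_eq_neg_iff_forall_eq_neg [FiniteDimensional K A] {B : A →ₗ[K] A →ₗ[K] K}
    {φ : A ⊗[K] A} (hφ1 : ∀ a : A, Tten φ (B a) = a)
    (hφ2 : ∀ f : Module.Dual K A, B (Tten φ f) = f) :
    TensorProduct.comm K A A φ = -φ ↔ ∀ a b : A, B a b = - B b a := by
  have hB : Function.Surjective B := fun f => ⟨Tten φ f, hφ2 f⟩
  rw [Tten_ext_iff_dual, hB.forall₂]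
  simp only [Tten_comm_apply, hφ1, Tten_neg, LinearMap.neg_apply, map_neg]

lemma radInv_iff_forall_invariant [FiniteDimensional K A] (m : A →ₗ[K] A →ₗ[K] A)
    {B : A →ₗ[K] A →ₗ[K] K} {φ : A ⊗[K] A} (hφ1 : ∀ a : A, Tten φ (B a) = a)
    (hφ2 : ∀ f : Module.Dual K A, B (Tten φ f) = f) :
    RadInv m φ ↔ ∀ a b c : A, B (m a b) c = B a (m b c - m c b) := by
  have hB : Function.Surjective B := fun f => ⟨Tten φ f, hφ2 f⟩
  have hB' : Function.Injective B := Function.LeftInverse.injective (g := Tten φ) hφ1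
  rw [forall_comm]
  refine forall_congr' fun b => ?_
  rw [Tten_ext_iff, hB.forall]
  refine forall_congr' fun a => ?_
  rw [Tten_map, Tten_map, ← hB'.eq_iff, LinearMap.ext_iff]
  simp [hφ1, hφ2]

theorem stmt11_general [FiniteDimensional K A] (m : A →ₗ[K] A →ₗ[K] A)
    (B : A →ₗ[K] A →ₗ[K] K)
    (φ : A ⊗[K] A) (hφ1 : ∀ a : A, Tten φ (B a) = a)
    (hφ2 : ∀ f : Module.Dual K A, B (Tten φ f) = f) :
    ((∀ a b : A, B a b = - B b a) ∧ ∀ a b c : A, B (m a b) c = B a (m b c - m c b)) ↔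
      ((TensorProduct.comm K A A) φ = -φ ∧ RadInv m φ) :=
  and_congr (comm_eq_neg_iff_forall_eq_neg hφ1 hφ2).symm
    (radInv_iff_forall_invariant m hφ1 hφ2).symm

theorem stmt11 [FiniteDimensional K A] (m : A →ₗ[K] A →ₗ[K] A) (hm : IsPermMul m)
    (B : A →ₗ[K] A →ₗ[K] K) (hB : Function.Bijective B)
    (φ : A ⊗[K] A) (hφ1 : ∀ a : A, Tten φ (B a) = a)
    (hφ2 : ∀ f : Module.Dual K A, B (Tten φ f) = f) :
    ((∀ a b : A, B a b = - B b a) ∧ ∀ a b c : A, B (m a b) c = B a (m b c - m c b)) ↔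
      ((TensorProduct.comm K A A) φ = -φ ∧ RadInv m φ) :=
  stmt11_general m B φ hφ1 hφ2

end
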